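/- arXiv:2011.14779 — 2 statements merged into one kernel-verified Lean document; each statement's English description precedes it below -/
import Mathlib

section
/- For the softmax Jacobian J (with J_{ij} = δ_{ij} S_i - S_i S_j, S a strictly positive probability vector) and any vector Z, the Euclidean norm of J Z is at most the Euclidean norm of Z: ‖J Z‖ ≤ ‖Z‖. -/
/-! Writing `m = ∑ⱼ Sⱼ zⱼ` for the `S`-mean of `z`, the Jacobian acts by `(J z)ᵢ = Sᵢ (zᵢ - m)`.
Since `0 ≤ Sᵢ ≤ 1`, `‖J z‖² ≤ ∑ᵢ Sᵢ (zᵢ - m)²`, which is the `S`-variance of `z`; it equals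
`∑ᵢ Sᵢ zᵢ² - m²`, so it is at most `∑ᵢ Sᵢ zᵢ² ≤ ‖z‖²`. -/

open Matrix Finset

variable {ι : Type*} [Fintype ι]

def softmaxJacobian [DecidableEq ι] (S : ι → ℝ) : Matrix ι ι ℝ :=
  diagonal S - vecMulVec S S

theorem softmaxJacobian_mulVec_apply [DecidableEq ι] (S z : ι → ℝ) (i : ι) :
    (softmaxJacobian S *ᵥ z) i = S i * (z i - S ⬝ᵥ z) := by
  simp only [softmaxJacobian, sub_mulVec, vecMulVec_mulVec, Pi.sub_apply, mulVec_diagonal,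
    Pi.smul_apply, op_smul_eq_mul]
  ring

theorem sum_mul_sub_dotProduct_sq {S : ι → ℝ} (hS : ∑ i, S i = 1) (z : ι → ℝ) :
    ∑ i, S i * (z i - S ⬝ᵥ z) ^ 2 = ∑ i, S i * z i ^ 2 - (S ⬝ᵥ z) ^ 2 := by
  have expand : ∀ i, S i * (z i - S ⬝ᵥ z) ^ 2
      = S i * z i ^ 2 - 2 * (S ⬝ᵥ z) * (S i * z i) + (S ⬝ᵥ z) ^ 2 * S i := fun i => by ring
  rw [Fintype.sum_congr _ _ expand, sum_add_distrib, sum_sub_distrib, ← mul_sum, ← mul_sum, hS,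
    dotProduct]
  ring

theorem sum_sq_softmaxJacobian_mulVec_le [DecidableEq ι] {S : ι → ℝ} (hS₀ : ∀ i, 0 ≤ S i)
    (hS : ∑ i, S i = 1) (z : ι → ℝ) :
    ∑ i, (softmaxJacobian S *ᵥ z) i ^ 2 ≤ ∑ i, z i ^ 2 := by
  have hS₁ : ∀ i, S i ≤ 1 := fun i =>
    hS ▸ single_le_sum (fun j _ => hS₀ j) (mem_univ i)
  simp only [softmaxJacobian_mulVec_apply]
  calc ∑ i, (S i * (z i - S ⬝ᵥ z)) ^ 2
      ≤ ∑ i, S i * (z i - S ⬝ᵥ z) ^ 2 := sum_le_sum fun i _ => by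
        rw [mul_pow, sq (S i), mul_assoc]
        exact mul_le_of_le_one_left (mul_nonneg (hS₀ i) (sq_nonneg _)) (hS₁ i)
    _ = ∑ i, S i * z i ^ 2 - (S ⬝ᵥ z) ^ 2 := sum_mul_sub_dotProduct_sq hS z
    _ ≤ ∑ i, S i * z i ^ 2 := sub_le_self _ (sq_nonneg _)
    _ ≤ ∑ i, z i ^ 2 := sum_le_sum fun i _ => mul_le_of_le_one_left (sq_nonneg _) (hS₁ i)

/-- The softmax Jacobian is a contraction for the Euclidean norm: `‖J Z‖ ≤ ‖Z‖`. -/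
theorem softmax_jacobian_mulVec_norm_le (K : ℕ) (S : Fin K → ℝ)
    (hpos : ∀ i, 0 < S i) (hsum : ∑ i, S i = 1)
    (J : Matrix (Fin K) (Fin K) ℝ)
    (hJ : ∀ i j, J i j = (if i = j then S i else 0) - S i * S j)
    (Z : EuclideanSpace ℝ (Fin K)) :
    ‖(WithLp.equiv 2 (Fin K → ℝ)).symm (J.mulVec ((WithLp.equiv 2 (Fin K → ℝ)) Z))‖ ≤ ‖Z‖ := by
  have hJS : J = softmaxJacobian S := ext fun i j => by
    simp [hJ, softmaxJacobian, diagonal_apply, vecMulVec_apply]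
  subst hJS
  rw [EuclideanSpace.norm_eq, EuclideanSpace.norm_eq]
  apply Real.sqrt_le_sqrt
  simpa using sum_sq_softmaxJacobian_mulVec_le (fun i => (hpos i).le) hsum Z.ofLp
end

section
/- The ℓ₁ loss between logits controls the ℓ₁ distance between softmax outputs: for v, s : Fin K → ℝ, ∑_i |softmax(v)_i − softmax(s)_i| ≤ 2 ∑_i |v_i − s_i|. -/
/-!
Writing `A = ∑ exp vₖ` and `B = ∑ exp sₖ` with `B ≤ A`, split
`exp vᵢ / A - exp sᵢ / B = (exp vᵢ - exp sᵢ) / A - (exp sᵢ / B) (A - B) / A`.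
Since the weights `exp sᵢ / B` sum to one and `A - B ≤ ∑ |exp vᵢ - exp sᵢ|`, both terms contribute
at most `∑ |exp vᵢ - exp sᵢ| / A`. Finally `|exp x - exp y| ≤ |x - y| max (exp x) (exp y)` and every
`exp vᵢ`, `exp sᵢ` is at most `A`.
-/

open Finset Real

theorem abs_exp_sub_exp_le_mul_max (x y : ℝ) :
    |exp x - exp y| ≤ |x - y| * max (exp x) (exp y) := by
  wlog hyx : y ≤ x generalizing x y
  · simpa only [abs_sub_comm, max_comm] using this y x (le_of_not_ge hyx)
  have hexp : exp y ≤ exp x := exp_le_exp.2 hyx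
  rw [abs_of_nonneg (sub_nonneg.2 hexp), abs_of_nonneg (sub_nonneg.2 hyx), max_eq_left hexp]
  have hfactor : exp y = exp (y - x) * exp x := by rw [← exp_add, sub_add_cancel]
  nlinarith [add_one_le_exp (y - x), exp_pos x]

section Normalize

variable {ι : Type*} [Fintype ι]

theorem sum_abs_div_sum_sub_div_sum_le_of_sum_le {a b : ι → ℝ} (hb : ∀ i, 0 ≤ b i)
    (hB : 0 < ∑ i, b i) (hBA : ∑ i, b i ≤ ∑ i, a i) :
    ∑ i, |a i / ∑ k, a k - b i / ∑ k, b k| ≤ 2 * (∑ i, |a i - b i|) / ∑ k, a k := by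
  set A := ∑ k, a k
  set B := ∑ k, b k
  have hA : 0 < A := hB.trans_le hBA
  have hsplit : ∀ i, a i / A - b i / B = (a i - b i) / A - b i / B * ((A - B) / A) := by
    intro i
    field_simp
    ring
  have hweights : ∑ i, b i / B = 1 := by rw [← sum_div, div_self hB.ne']
  have hgap : A - B ≤ ∑ i, |a i - b i| := by
    rw [← sum_sub_distrib]
    exact sum_le_sum fun i _ => le_abs_self _
  calc ∑ i, |a i / A - b i / B|
      ≤ ∑ i, (|a i - b i| / A + b i / B * ((A - B) / A)) := by
        refine sum_le_sum fun i _ => ?_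
        have hcorr : 0 ≤ b i / B * ((A - B) / A) :=
          mul_nonneg (div_nonneg (hb i) hB.le) (div_nonneg (sub_nonneg.2 hBA) hA.le)
        rw [hsplit]
        refine (abs_sub _ _).trans_eq ?_
        rw [abs_div, abs_of_pos hA, abs_of_nonneg hcorr]
    _ = (∑ i, |a i - b i|) / A + (A - B) / A := by
        rw [sum_add_distrib, ← sum_div, ← sum_mul, hweights, one_mul]
    _ ≤ 2 * (∑ i, |a i - b i|) / A := by
        rw [two_mul, add_div]
        gcongr

theorem sum_abs_div_sum_sub_div_sum_le {a b : ι → ℝ} (ha : ∀ i, 0 ≤ a i) (hb : ∀ i, 0 ≤ b i)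
    (hA : 0 < ∑ i, a i) (hB : 0 < ∑ i, b i) :
    ∑ i, |a i / ∑ k, a k - b i / ∑ k, b k|
      ≤ 2 * (∑ i, |a i - b i|) / max (∑ k, a k) (∑ k, b k) := by
  rcases le_total (∑ k, b k) (∑ k, a k) with hBA | hAB
  · rw [max_eq_left hBA]
    exact sum_abs_div_sum_sub_div_sum_le_of_sum_le hb hB hBA
  · rw [max_eq_right hAB]
    simpa only [abs_sub_comm] using sum_abs_div_sum_sub_div_sum_le_of_sum_le ha hA hAB

theorem sum_abs_exp_sub_exp_le (v s : ι → ℝ) :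
    ∑ i, |exp (v i) - exp (s i)|
      ≤ max (∑ k, exp (v k)) (∑ k, exp (s k)) * ∑ i, |v i - s i| := by
  rw [mul_sum]
  refine sum_le_sum fun i _ => (abs_exp_sub_exp_le_mul_max _ _).trans ?_
  rw [mul_comm]
  gcongr
  · exact single_le_sum (fun k _ => (exp_pos (v k)).le) (mem_univ i)
  · exact single_le_sum (fun k _ => (exp_pos (s k)).le) (mem_univ i)

end Normalize

/-- Softmax is 2-Lipschitz from logits (ℓ₁) to probabilities (ℓ₁):
`∑ |softmax(v)_i − softmax(s)_i| ≤ 2 ∑ |v_i − s_i|`. -/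
theorem softmax_l1_lipschitz (K : ℕ) (hK : 1 ≤ K)
    (softmax : (Fin K → ℝ) → Fin K → ℝ)
    (hsm : ∀ v i, softmax v i = Real.exp (v i) / ∑ k, Real.exp (v k))
    (v s : Fin K → ℝ) :
    ∑ i, |softmax v i - softmax s i| ≤ 2 * ∑ i, |v i - s i| := by
  have : Nonempty (Fin K) := ⟨⟨0, hK⟩⟩
  have hpos : ∀ w : Fin K → ℝ, 0 < ∑ k, exp (w k) := fun w =>
    sum_pos (fun k _ => exp_pos _) univ_nonempty
  have hmax : 0 < max (∑ k, exp (v k)) (∑ k, exp (s k)) := lt_max_of_lt_left (hpos v)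
  simp only [hsm]
  calc ∑ i, |exp (v i) / ∑ k, exp (v k) - exp (s i) / ∑ k, exp (s k)|
      ≤ 2 * (∑ i, |exp (v i) - exp (s i)|) / max (∑ k, exp (v k)) (∑ k, exp (s k)) :=
        sum_abs_div_sum_sub_div_sum_le (fun i => (exp_pos _).le) (fun i => (exp_pos _).le)
          (hpos v) (hpos s)
    _ ≤ 2 * ∑ i, |v i - s i| := by
        rw [div_le_iff₀ hmax, mul_assoc, mul_comm (∑ i, |v i - s i|)]
        gcongr
        exact sum_abs_exp_sub_exp_le v s
end
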